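/- arXiv:1810.10563 — 2 statements merged into one kernel-verified Lean document; each statement's English description precedes it below -/
import Mathlib

section
/- Let u ∈ ℝ^k and let 0 ≤ p ≤ q ≤ 1. Let F = {z ∈ ℝ^k : z ≥ 0 componentwise, p ≤ ∑_j z_j ≤ q} and let S = ∑_j max(u_j, 0) be the sum of the positive entries of u. If S > q, then every minimizer z* of ‖u − z‖² over F satisfies ∑_j z*_j = q; consequently, z* minimizes ‖u − z‖² over F if and only if z* minimizes ‖u − z‖² over the scaled simplex Δ_q = {z ∈ ℝ^k : z ≥ 0 componentwise, ∑_j z_j = q}. -/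
/-!
If `w ≥ 0` has mass `∑ w < q < ∑ max(u_j, 0)`, then the positive part of the residual `u - w` has
mass `V ≥ ∑ max(u_j, 0) - ∑ w > q - ∑ w`. Pushing `w` a fraction `t = (q - ∑ w) / V < 1` of the way
along that positive part shrinks every coordinate of the residual where it is positive, and raises
the mass of `w` exactly to `q`. So every feasible point with mass below `q` is strictly beaten by a
point of the scaled simplex, which lies in the feasible set.
-/

open Finset

section Minimization

variable {α β : Type*} [Preorder β] {f : α → β} {s t : Set α} {z : α}

theorem IsMinOn.mem_of_forall_notMem_exists_lt (hz : z ∈ s) (hmin : IsMinOn f s z)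
    (h : ∀ w ∈ s, w ∉ t → ∃ w' ∈ s, f w' < f w) : z ∈ t := by
  by_contra hzt
  obtain ⟨w', hw's, hlt⟩ := h z hz hzt
  exact (hmin hw's).not_gt hlt

theorem mem_isMinOn_iff_of_subset (hts : t ⊆ s)
    (h : ∀ w ∈ s, ∃ w' ∈ t, f w' ≤ f w ∧ (w ∉ t → f w' < f w)) :
    (z ∈ s ∧ IsMinOn f s z) ↔ (z ∈ t ∧ IsMinOn f t z) := by
  constructor
  · rintro ⟨hz, hmin⟩
    refine ⟨hmin.mem_of_forall_notMem_exists_lt hz fun w hw hwt => ?_, hmin.on_subset hts⟩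
    obtain ⟨w', hw't, -, hlt⟩ := h w hw
    exact ⟨w', hts hw't, hlt hwt⟩
  · rintro ⟨hz, hmin⟩
    refine ⟨hts hz, fun w hw => ?_⟩
    obtain ⟨w', hw't, hle, -⟩ := h w hw
    exact (hmin hw't).trans hle

end Minimization

theorem sq_sub_mul_max_le {a t : ℝ} (ht₀ : 0 ≤ t) (ht₂ : t ≤ 2) :
    (a - t * max a 0) ^ 2 ≤ a ^ 2 := by
  rcases le_total a 0 with ha | ha
  · simp [max_eq_right ha]
  · rw [max_eq_left ha]
    nlinarith [mul_nonneg (mul_nonneg ht₀ (sub_nonneg.2 ht₂)) (sq_nonneg a)]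

theorem sq_sub_mul_max_lt {a t : ℝ} (ha : 0 < a) (ht₀ : 0 < t) (ht₂ : t < 2) :
    (a - t * max a 0) ^ 2 < a ^ 2 := by
  rw [max_eq_left ha.le]
  nlinarith [mul_pos (mul_pos ht₀ (sub_pos.2 ht₂)) (pow_pos ha 2)]

theorem max_sub_le_max_sub {a b : ℝ} (hb : 0 ≤ b) : max a 0 - b ≤ max (a - b) 0 := by
  rcases le_total a 0 with ha | ha
  · rw [max_eq_right ha]
    linarith [le_max_right (a - b) 0]
  · rw [max_eq_left ha]
    exact le_max_left _ _

section SumOfSquares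

variable {ι : Type*} [Fintype ι]

theorem exists_sum_eq_sum_sq_sub_le (u w : ι → ℝ) {q : ℝ} (hw : ∀ j, 0 ≤ w j)
    (hwq : ∑ j, w j ≤ q) (hq : q < ∑ j, max (u j) 0) :
    ∃ w' : ι → ℝ, (∀ j, 0 ≤ w' j) ∧ ∑ j, w' j = q ∧
      ∑ j, (u j - w' j) ^ 2 ≤ ∑ j, (u j - w j) ^ 2 ∧
      (∑ j, w j < q → ∑ j, (u j - w' j) ^ 2 < ∑ j, (u j - w j) ^ 2) := by
  set v : ι → ℝ := fun j => max (u j - w j) 0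
  set V := ∑ j, v j
  have hV : ∑ j, max (u j) 0 - ∑ j, w j ≤ V := by
    rw [← sum_sub_distrib]
    exact sum_le_sum fun j _ => max_sub_le_max_sub (hw j)
  have hV₀ : 0 < V := by linarith
  set t := (q - ∑ j, w j) / V
  have ht₀ : 0 ≤ t := div_nonneg (by linarith) hV₀.le
  have ht₂ : t < 2 := by
    have : t < 1 := by rw [div_lt_one hV₀]; linarith
    linarith
  have hres : ∀ j, u j - (w j + t * v j) = (u j - w j) - t * max (u j - w j) 0 := fun j => by
    ring
  refine ⟨fun j => w j + t * v j, fun j => add_nonneg (hw j) (mul_nonneg ht₀ (le_max_right _ _)),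
    ?_, ?_, fun hlt => ?_⟩
  · rw [sum_add_distrib, ← mul_sum, div_mul_cancel₀ _ hV₀.ne']
    ring
  · simp only [hres]
    exact sum_le_sum fun j _ => sq_sub_mul_max_le ht₀ ht₂.le
  · obtain ⟨i, -, hi⟩ : ∃ i ∈ univ, (0 : ℝ) < v i := exists_lt_of_sum_lt (by simpa using hV₀)
    have hi : 0 < u i - w i := by simpa [v] using hi
    simp only [hres]
    exact sum_lt_sum (fun j _ => sq_sub_mul_max_le ht₀ ht₂.le)
      ⟨i, mem_univ i, sq_sub_mul_max_lt hi (div_pos (by linarith) hV₀) ht₂⟩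

end SumOfSquares

theorem EuclideanSpace.norm_sub_sq_eq_sum {ι : Type*} [Fintype ι] (x y : EuclideanSpace ℝ ι) :
    ‖x - y‖ ^ 2 = ∑ j, (x j - y j) ^ 2 := by
  simp [EuclideanSpace.norm_sq_eq]

theorem EuclideanSpace.exists_sum_eq_norm_sub_sq_le {ι : Type*} [Fintype ι]
    (u w : EuclideanSpace ℝ ι) {q : ℝ} (hw : ∀ j, 0 ≤ w j) (hwq : ∑ j, w j ≤ q)
    (hq : q < ∑ j, max (u j) 0) :
    ∃ w' : EuclideanSpace ℝ ι, (∀ j, 0 ≤ w' j) ∧ ∑ j, w' j = q ∧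
      ‖u - w'‖ ^ 2 ≤ ‖u - w‖ ^ 2 ∧ (∑ j, w j < q → ‖u - w'‖ ^ 2 < ‖u - w‖ ^ 2) := by
  obtain ⟨w', hw'⟩ := exists_sum_eq_sum_sq_sub_le u w hw hwq hq
  refine ⟨WithLp.toLp 2 w', ?_⟩
  simpa only [norm_sub_sq_eq_sum] using hw'

theorem stmt_3_general (k : ℕ) (u : EuclideanSpace ℝ (Fin k)) (p q : ℝ)
    (hpq : p ≤ q)
    (F : Set (EuclideanSpace ℝ (Fin k)))
    (hF : F = {z | (∀ j, 0 ≤ z j) ∧ p ≤ ∑ j, z j ∧ ∑ j, z j ≤ q})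
    (Δq : Set (EuclideanSpace ℝ (Fin k)))
    (hΔq : Δq = {z | (∀ j, 0 ≤ z j) ∧ ∑ j, z j = q})
    (hS : q < ∑ j, max (u j) 0) :
    (∀ z ∈ F, (∀ w ∈ F, ‖u - z‖ ^ 2 ≤ ‖u - w‖ ^ 2) → ∑ j, z j = q) ∧
    (∀ z, (z ∈ F ∧ ∀ w ∈ F, ‖u - z‖ ^ 2 ≤ ‖u - w‖ ^ 2) ↔
      (z ∈ Δq ∧ ∀ w ∈ Δq, ‖u - z‖ ^ 2 ≤ ‖u - w‖ ^ 2)) := by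
  have hΔF : Δq ⊆ F := by
    rw [hF, hΔq]
    exact fun z ⟨hz, hzq⟩ => ⟨hz, hzq ▸ hpq, hzq.le⟩
  have improve : ∀ w ∈ F, ∃ w' ∈ Δq,
      ‖u - w'‖ ^ 2 ≤ ‖u - w‖ ^ 2 ∧ (w ∉ Δq → ‖u - w'‖ ^ 2 < ‖u - w‖ ^ 2) := by
    rw [hF, hΔq]
    rintro w ⟨hw, -, hwq⟩
    obtain ⟨w', hw', hw'q, hle, hlt⟩ := EuclideanSpace.exists_sum_eq_norm_sub_sq_le u w hw hwq hS
    exact ⟨w', ⟨hw', hw'q⟩, hle, fun hwΔ => hlt (hwq.lt_of_ne fun h => hwΔ ⟨hw, h⟩)⟩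
  refine ⟨fun z hz hmin => ?_, fun z => mem_isMinOn_iff_of_subset hΔF improve⟩
  have hzΔ : z ∈ Δq := IsMinOn.mem_of_forall_notMem_exists_lt (f := fun w => ‖u - w‖ ^ 2) hz hmin
    fun w hw hwΔ => (improve w hw).imp fun w' ⟨hw'Δ, _, hlt⟩ => ⟨hΔF hw'Δ, hlt hwΔ⟩
  rw [hΔq] at hzΔ
  exact hzΔ.2

/-- If the sum `S` of positive entries of `u` satisfies `S > q`, then every
minimizer of `‖u − z‖²` over `F = {z ≥ 0, p ≤ 1ᵀz ≤ q}` has `1ᵀz = q`, and minimizing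
over `F` is equivalent to minimizing over the scaled simplex `Δ_q`. -/
theorem stmt_3 (k : ℕ) (u : EuclideanSpace ℝ (Fin k)) (p q : ℝ)
    (hp : 0 ≤ p) (hpq : p ≤ q) (hq : q ≤ 1)
    (F : Set (EuclideanSpace ℝ (Fin k)))
    (hF : F = {z | (∀ j, 0 ≤ z j) ∧ p ≤ ∑ j, z j ∧ ∑ j, z j ≤ q})
    (Δq : Set (EuclideanSpace ℝ (Fin k)))
    (hΔq : Δq = {z | (∀ j, 0 ≤ z j) ∧ ∑ j, z j = q})
    (hS : q < ∑ j, max (u j) 0) :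
    (∀ z ∈ F, (∀ w ∈ F, ‖u - z‖ ^ 2 ≤ ‖u - w‖ ^ 2) → ∑ j, z j = q) ∧
    (∀ z, (z ∈ F ∧ ∀ w ∈ F, ‖u - z‖ ^ 2 ≤ ‖u - w‖ ^ 2) ↔
      (z ∈ Δq ∧ ∀ w ∈ Δq, ‖u - z‖ ^ 2 ≤ ‖u - w‖ ^ 2)) :=
  stmt_3_general k u p q hpq F hF Δq hΔq hS
end

section
/- Let n, k be natural numbers with 1 ≤ k ≤ n, let K ⊆ {1,...,n} with |K| = k, and define C = {w ∈ ℝⁿ : w ≥ 0 componentwise, ∑_j w_j = 1, ‖w‖₀ ≤ k}. Suppose w̄ ∈ C satisfies w̄_j > 0 for every j ∈ K and w̄_j = 0 for every j ∉ K. Then the limiting normal cone of C at w̄ equals the Fréchet normal cone of C at w̄: N_C(w̄) = N̂_C(w̄). -/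
/-!
The `k` coordinates in `K` stay positive near `w̄`, so they use up the whole budget `‖w‖₀ ≤ k` and
every point of `C` near `w̄` is supported on `K`. Hence near `w̄` the set `C` is the affine subspace
`w̄ + L` with `L = {d | supp d ⊆ K, ∑ d = 0}`, and then so it is near every point of `C` close to
`w̄`. At all these points both normal cones are `Lᗮ`, which is closed, so limits of Fréchet normals
at nearby points stay in the Fréchet normal cone at `w̄`.
-/

open scoped RealInnerProductSpace

/-- The Fréchet normal cone of a set `C` at `x`: vectors `v` such that
`liminf_{u → x, u ∈ C, u ≠ x} −⟨v, u − x⟩ / ‖u − x‖ ≥ 0`, stated in ε-δ form. -/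
def frechetNormalCone {E : Type*} [NormedAddCommGroup E] [InnerProductSpace ℝ E]
    (C : Set E) (x : E) : Set E :=
  {v | ∀ ε > 0, ∃ δ > 0, ∀ u ∈ C, u ≠ x → ‖u - x‖ < δ → ⟪v, u - x⟫ ≤ ε * ‖u - x‖}

/-- The limiting (Mordukhovich) normal cone of `C` at `x`: limits `v` of sequences
`vⱼ ∈ N̂_C(wⱼ)` with `wⱼ ∈ C`, `wⱼ → x`. -/
def limitingNormalCone {E : Type*} [NormedAddCommGroup E] [InnerProductSpace ℝ E]
    (C : Set E) (x : E) : Set E :=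
  {v | ∃ w vs : ℕ → E, (∀ j, w j ∈ C) ∧ Filter.Tendsto w Filter.atTop (nhds x) ∧
    (∀ j, vs j ∈ frechetNormalCone C (w j)) ∧ Filter.Tendsto vs Filter.atTop (nhds v)}

open Filter Topology

section NormalCones

variable {E : Type*} [NormedAddCommGroup E] [InnerProductSpace ℝ E]

theorem frechetNormalCone_subset_limitingNormalCone {C : Set E} {x : E} (hx : x ∈ C) :
    frechetNormalCone C x ⊆ limitingNormalCone C x :=
  fun v hv => ⟨fun _ => x, fun _ => v, fun _ => hx, tendsto_const_nhds, fun _ => hv,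
    tendsto_const_nhds⟩

theorem limitingNormalCone_subset_of_isClosed {C S : Set E} {x : E} (hS : IsClosed S)
    (h : ∀ᶠ w in 𝓝 x, w ∈ C → frechetNormalCone C w ⊆ S) :
    limitingNormalCone C x ⊆ S := by
  rintro v ⟨w, vs, hwC, hw, hvs, hv⟩
  refine hS.mem_of_tendsto hv ?_
  filter_upwards [hw.eventually h] with j hj using hj (hwC j) (hvs j)

theorem inner_nonpos_of_mem_frechetNormalCone {C : Set E} {x v d : E}
    (hv : v ∈ frechetNormalCone C x) (hd : ∀ᶠ t in 𝓝[>] (0 : ℝ), x + t • d ∈ C) :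
    ⟪v, d⟫ ≤ 0 := by
  rcases eq_or_ne d 0 with rfl | hd0
  · simp
  have hdpos : 0 < ‖d‖ := norm_pos_iff.2 hd0
  have bound : ∀ ε > 0, ⟪v, d⟫ ≤ ε * ‖d‖ := by
    intro ε hε
    obtain ⟨δ, hδ, hvδ⟩ := hv ε hε
    have hsmall : Tendsto (fun t : ℝ => ‖t • d‖) (𝓝[>] 0) (𝓝 0) := by
      have : Continuous fun t : ℝ => ‖t • d‖ := by fun_prop
      simpa using tendsto_nhdsWithin_of_tendsto_nhds (this.tendsto 0)
    obtain ⟨t, ht, hmem, hlt⟩ := (eventually_mem_nhdsWithin.and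
      (hd.and (hsmall.eventually_lt_const hδ))).exists
    have ht : (0 : ℝ) < t := ht
    have hfrechet := hvδ (x + t • d) hmem (by simp [ht.ne', hd0]) (by simpa using hlt)
    rw [add_sub_cancel_left, inner_smul_right, norm_smul, Real.norm_of_nonneg ht.le,
      mul_left_comm] at hfrechet
    exact le_of_mul_le_mul_left hfrechet ht
  refine le_of_forall_pos_le_add fun ε hε => ?_
  simpa [div_mul_cancel₀ ε hdpos.ne'] using bound (ε / ‖d‖) (by positivity)

variable {C : Set E} {L : Submodule ℝ E} {x : E}

theorem frechetNormalCone_subset_orthogonal (h : ∀ᶠ u in 𝓝 x, u - x ∈ L → u ∈ C) :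
    frechetNormalCone C x ⊆ (Lᗮ : Set E) := by
  intro v hv
  have hline : ∀ d ∈ L, ∀ᶠ t in 𝓝[>] (0 : ℝ), x + t • d ∈ C := by
    intro d hd
    have hcont : Tendsto (fun t : ℝ => x + t • d) (𝓝 0) (𝓝 x) := by
      have : Continuous fun t : ℝ => x + t • d := by fun_prop
      simpa using this.tendsto 0
    filter_upwards [tendsto_nhdsWithin_of_tendsto_nhds hcont h] with t ht
    exact ht (by simpa using L.smul_mem t hd)
  refine (Submodule.mem_orthogonal' L v).2 fun d hd => le_antisymm
    (inner_nonpos_of_mem_frechetNormalCone hv (hline d hd)) ?_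
  simpa [inner_neg_right] using
    inner_nonpos_of_mem_frechetNormalCone hv (hline (-d) (L.neg_mem hd))

theorem orthogonal_subset_frechetNormalCone (h : ∀ᶠ u in 𝓝 x, u ∈ C → u - x ∈ L) :
    (Lᗮ : Set E) ⊆ frechetNormalCone C x := by
  intro v hv ε hε
  obtain ⟨δ, hδ, hδC⟩ := Metric.eventually_nhds_iff.1 h
  refine ⟨δ, hδ, fun u hu _ hux => ?_⟩
  rw [(Submodule.mem_orthogonal' L v).1 hv _ (hδC (by rwa [dist_eq_norm]) hu)]
  positivity

theorem eventually_eventually_mem_iff_sub_mem (h : ∀ᶠ u in 𝓝 x, u ∈ C ↔ u - x ∈ L) :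
    ∀ᶠ w in 𝓝 x, w ∈ C → ∀ᶠ u in 𝓝 w, u ∈ C ↔ u - w ∈ L := by
  filter_upwards [h, h.eventually_nhds] with w hwx hw hwC
  have hwL : w - x ∈ L := hwx.1 hwC
  filter_upwards [hw] with u hu
  rw [hu, ← L.sub_mem_iff_left hwL, sub_sub_sub_cancel_right]

theorem limitingNormalCone_eq_frechetNormalCone_of_eventually_affine
    (h : ∀ᶠ u in 𝓝 x, u ∈ C ↔ u - x ∈ L) :
    limitingNormalCone C x = frechetNormalCone C x := by
  have hx : x ∈ C := h.self_of_nhds.2 (by simp)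
  refine subset_antisymm ?_ (frechetNormalCone_subset_limitingNormalCone hx)
  calc limitingNormalCone C x ⊆ Lᗮ :=
        limitingNormalCone_subset_of_isClosed L.isClosed_orthogonal <|
          (eventually_eventually_mem_iff_sub_mem h).mono fun w hw hwC =>
            frechetNormalCone_subset_orthogonal ((hw hwC).mono fun _ hu => hu.2)
    _ ⊆ frechetNormalCone C x :=
        orthogonal_subset_frechetNormalCone (h.mono fun _ hu => hu.1)

end NormalCones

section SparseSimplex

variable {ι : Type*} [Fintype ι]

def sparseSimplex (k : ℕ) : Set (EuclideanSpace ℝ ι) :=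
  {w | (∀ j, 0 ≤ w j) ∧ ∑ j, w j = 1 ∧ (Finset.univ.filter (fun j => w j ≠ 0)).card ≤ k}

def simplexFaceDirection (K : Finset ι) : Submodule ℝ (EuclideanSpace ℝ ι) where
  carrier := {d | (∀ j ∉ K, d j = 0) ∧ ∑ j, d j = 0}
  add_mem' := by
    rintro d e ⟨hd, hd'⟩ ⟨he, he'⟩
    exact ⟨fun j hj => by simp [hd j hj, he j hj], by simp [Finset.sum_add_distrib, hd', he']⟩
  zero_mem' := by simp
  smul_mem' := by
    rintro c d ⟨hd, hd'⟩
    exact ⟨fun j hj => by simp [hd j hj], by simp [← Finset.mul_sum, hd']⟩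

theorem mem_simplexFaceDirection {K : Finset ι} {d : EuclideanSpace ℝ ι} :
    d ∈ simplexFaceDirection K ↔ (∀ j ∉ K, d j = 0) ∧ ∑ j, d j = 0 :=
  Iff.rfl

theorem mem_sparseSimplex_card_iff {K : Finset ι} {w : EuclideanSpace ℝ ι}
    (hpos : ∀ j ∈ K, 0 < w j) :
    w ∈ sparseSimplex K.card ↔ (∀ j ∉ K, w j = 0) ∧ ∑ j, w j = 1 := by
  classical
  have hK : K ⊆ Finset.univ.filter (fun j => w j ≠ 0) := fun j hj => by
    simpa using (hpos j hj).ne'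
  constructor
  · rintro ⟨-, hsum, hcard⟩
    have hsupp := Finset.eq_of_subset_of_card_le hK hcard
    refine ⟨fun j hj => ?_, hsum⟩
    by_contra hne
    exact hj (hsupp ▸ Finset.mem_filter.2 ⟨Finset.mem_univ j, hne⟩)
  · rintro ⟨hzero, hsum⟩
    refine ⟨fun j => ?_, hsum, Finset.card_le_card fun j hj => ?_⟩
    · by_cases hj : j ∈ K
      · exact (hpos j hj).le
      · exact (hzero j hj).ge
    · by_contra hjK
      exact (Finset.mem_filter.1 hj).2 (hzero j hjK)

theorem eventually_mem_sparseSimplex_iff {K : Finset ι} {w : EuclideanSpace ℝ ι}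
    (hw : w ∈ sparseSimplex K.card) (hpos : ∀ j ∈ K, 0 < w j) :
    ∀ᶠ u in 𝓝 w, u ∈ sparseSimplex K.card ↔ u - w ∈ simplexFaceDirection K := by
  obtain ⟨hzero, hsum⟩ := (mem_sparseSimplex_card_iff hpos).1 hw
  have hnear : ∀ᶠ u in 𝓝 w, ∀ j ∈ K, 0 < u j := (Finset.eventually_all K).2 fun j hj =>
    continuousAt_const.eventually_lt (PiLp.continuous_apply 2 _ j).continuousAt (hpos j hj)
  filter_upwards [hnear] with u hu
  simp only [mem_sparseSimplex_card_iff hu, mem_simplexFaceDirection, PiLp.sub_apply,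
    Finset.sum_sub_distrib, hsum, sub_eq_zero]
  exact and_congr (forall₂_congr fun j hj => by rw [hzero j hj]) Iff.rfl

end SparseSimplex

theorem stmt_7_general (n k : ℕ)
    (K : Finset (Fin n)) (hK : K.card = k)
    (C : Set (EuclideanSpace ℝ (Fin n)))
    (hC : C = {w | (∀ j, 0 ≤ w j) ∧ ∑ j, w j = 1 ∧
      (Finset.univ.filter (fun j => w j ≠ 0)).card ≤ k})
    (wbar : EuclideanSpace ℝ (Fin n)) (hwC : wbar ∈ C)
    (hpos : ∀ j ∈ K, 0 < wbar j) :
    limitingNormalCone C wbar = frechetNormalCone C wbar := by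
  have hC' : C = sparseSimplex K.card := by rw [hC, hK]; rfl
  subst hC'
  exact limitingNormalCone_eq_frechetNormalCone_of_eventually_affine
    (eventually_mem_sparseSimplex_iff hwC hpos)

/-- For the cardinality-constrained simplex `C`, at a point `w̄` with full
support cardinality `k` (positive exactly on a `k`-element set `K`), the limiting normal
cone coincides with the Fréchet normal cone. -/
theorem stmt_7 (n k : ℕ) (hk1 : 1 ≤ k) (hkn : k ≤ n)
    (K : Finset (Fin n)) (hK : K.card = k)
    (C : Set (EuclideanSpace ℝ (Fin n)))
    (hC : C = {w | (∀ j, 0 ≤ w j) ∧ ∑ j, w j = 1 ∧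
      (Finset.univ.filter (fun j => w j ≠ 0)).card ≤ k})
    (wbar : EuclideanSpace ℝ (Fin n)) (hwC : wbar ∈ C)
    (hpos : ∀ j ∈ K, 0 < wbar j) (hzero : ∀ j ∉ K, wbar j = 0) :
    limitingNormalCone C wbar = frechetNormalCone C wbar :=
  stmt_7_general n k K hK C hC wbar hwC hpos
end
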